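/- arXiv:math/9509203 — 5 statements merged into one kernel-verified Lean document; each statement's English description precedes it below -/
import Mathlib

section
/- Let G ⊆ ℂ^n be an n-circled domain, p ∈ [1,+∞), and let f be holomorphic on G with f ∈ L^p(G, Λ_{2n}). Then for every ν ∈ ℤ^n, ∫_G |a_ν(f) z^ν|^p dΛ_{2n}(z) ≤ ∫_G |f|^p dΛ_{2n}. In particular, if f ≢ 0, then there exists ν_0 ∈ ℤ^n such that the monomial z^{ν_0} is holomorphic on G (i.e., z_j ≠ 0 on G whenever ν_{0,j} < 0) and z^{ν_0} ∈ L^p(G, Λ_{2n}). -/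
open MeasureTheory Filter Topology Set
open scoped ENNReal

noncomputable section

/-- Complex partial derivative in direction `j`. -/
def pd (n : ℕ) (j : Fin n) (f : (Fin n → ℂ) → ℂ) : (Fin n → ℂ) → ℂ :=
  fun z => fderiv ℂ f z (Pi.single j 1)

/-- Mixed partial derivative `∂^ν`. -/
def pdM (n : ℕ) (ν : Fin n → ℕ) (f : (Fin n → ℂ) → ℂ) : (Fin n → ℂ) → ℂ :=
  (List.finRange n).foldr (fun j g => (pd n j)^[ν j] g) f

/-- A domain: a nonempty open connected set. -/
def IsDomainSet {n : ℕ} (G : Set (Fin n → ℂ)) : Prop :=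
  IsOpen G ∧ IsConnected G

/-- `G` is `n`-circled. -/
def IsCircled {n : ℕ} (G : Set (Fin n → ℂ)) : Prop :=
  ∀ z ∈ G, ∀ θ : Fin n → ℝ, (fun j => Complex.exp ((θ j : ℂ) * Complex.I) * z j) ∈ G

/-- `G` is an `F`-domain of holomorphy. -/
def IsDomainOfHolomorphyFor {n : ℕ} (G : Set (Fin n → ℂ))
    (F : Set ((Fin n → ℂ) → ℂ)) : Prop :=
  ¬ ∃ G₀ Gt : Set (Fin n → ℂ), IsDomainSet G₀ ∧ IsDomainSet Gt ∧ G₀.Nonempty ∧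
      G₀ ⊆ G ∩ Gt ∧ ¬ Gt ⊆ G ∧
      ∀ f ∈ F, ∃ ft : (Fin n → ℂ) → ℂ, DifferentiableOn ℂ ft Gt ∧ EqOn ft f G₀

/-- `G` is a domain of holomorphy. -/
def IsDomainOfHolomorphy {n : ℕ} (G : Set (Fin n → ℂ)) : Prop :=
  IsDomainOfHolomorphyFor G {f | DifferentiableOn ℂ f G}

/-- `G` is fat. -/
def IsFat {n : ℕ} (G : Set (Fin n → ℂ)) : Prop :=
  G = interior (closure G)

/-- `log G`. -/
def logSet {n : ℕ} (G : Set (Fin n → ℂ)) : Set (Fin n → ℝ) :=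
  {x | (fun j => (Real.exp (x j) : ℂ)) ∈ G}

/-- The largest vector subspace `F` with `X + F = X` (for a convex domain `X`). -/
def ESpace {n : ℕ} (X : Set (Fin n → ℝ)) : Set (Fin n → ℝ) :=
  {v | ∀ x ∈ X, ∀ t : ℝ, x + t • v ∈ X}

/-- A subspace (given as a set) is of rational type: it is spanned by its integer points. -/
def IsRationalType {n : ℕ} (F : Set (Fin n → ℝ)) : Prop :=
  (Submodule.span ℝ (F ∩ {x | ∀ j, ∃ m : ℤ, x j = (m : ℝ)}) : Set (Fin n → ℝ)) = F

/-- Bounded holomorphic functions on `G`. -/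
def Hinf {n : ℕ} (G : Set (Fin n → ℂ)) : Set ((Fin n → ℂ) → ℂ) :=
  {f | DifferentiableOn ℂ f G ∧ ∃ C : ℝ, ∀ z ∈ G, ‖f z‖ ≤ C}

/-- `L_h^{p,k}(G)`. -/
def LhPK {n : ℕ} (G : Set (Fin n → ℂ)) (p : ℝ≥0∞) (k : ℕ) :
    Set ((Fin n → ℂ) → ℂ) :=
  {f | DifferentiableOn ℂ f G ∧ ∀ ν : Fin n → ℕ, (∑ j, ν j) ≤ k →
      MemLp (pdM n ν f) p (volume.restrict G)}

/-- `L_h^{⋄,k}(G) = ⋂_{p ∈ [1,∞]} L_h^{p,k}(G)`. -/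
def LhDiaK {n : ℕ} (G : Set (Fin n → ℂ)) (k : ℕ) : Set ((Fin n → ℂ) → ℂ) :=
  {f | ∀ p : ℝ≥0∞, 1 ≤ p → f ∈ LhPK G p k}

/-- `A^k(G)`. -/
def Ak {n : ℕ} (G : Set (Fin n → ℂ)) (k : ℕ) : Set ((Fin n → ℂ) → ℂ) :=
  {f | DifferentiableOn ℂ f G ∧ ∀ ν : Fin n → ℕ, (∑ j, ν j) ≤ k →
      ∃ g : (Fin n → ℂ) → ℂ, ContinuousOn g (closure G) ∧ EqOn g (pdM n ν f) G}

/-- `A^∞(G)`. -/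
def Ainf {n : ℕ} (G : Set (Fin n → ℂ)) : Set ((Fin n → ℂ) → ℂ) :=
  {f | DifferentiableOn ℂ f G ∧ ∀ ν : Fin n → ℕ,
      ∃ g : (Fin n → ℂ) → ℂ, ContinuousOn g (closure G) ∧ EqOn g (pdM n ν f) G}

/-- `H^{∞,k}(G)`. -/
def HinfK {n : ℕ} (G : Set (Fin n → ℂ)) (k : ℕ) : Set ((Fin n → ℂ) → ℂ) :=
  {f | DifferentiableOn ℂ f G ∧ ∀ ν : Fin n → ℕ, (∑ j, ν j) ≤ k →
      ∃ C : ℝ, ∀ z ∈ G, ‖pdM n ν f z‖ ≤ C}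

/-- The class `S(G)`. -/
def Sclass {n : ℕ} (G : Set (Fin n → ℂ)) : Set ((Fin n → ℂ) → ℂ) :=
  {f | DifferentiableOn ℂ f G ∧ ∀ K : Set (Fin n → ℂ), IsCompact K → K ⊆ closure G →
      ∀ ν : Fin n → ℕ, ∃ C : ℝ, ∀ z ∈ K ∩ G, ‖pdM n ν f z‖ ≤ C}

/-- `O(cl G)`: functions on `G` extending holomorphically to a neighbourhood of `cl G`. -/
def Ocl {n : ℕ} (G : Set (Fin n → ℂ)) : Set ((Fin n → ℂ) → ℂ) :=
  {f | ∃ U : Set (Fin n → ℂ), IsOpen U ∧ closure G ⊆ U ∧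
      ∃ g : (Fin n → ℂ) → ℂ, DifferentiableOn ℂ g U ∧ EqOn f g G}

/-- `V_ε`. -/
def Veps {n : ℕ} (ε : Fin n → Bool) : Set (Fin n → ℂ) :=
  {z | ∀ j, (ε j = true → z j = 0) ∧ (ε j = false → z j ≠ 0)}

/-- `G_ε`. -/
def Geps {n : ℕ} (G : Set (Fin n → ℂ)) (ε : Fin n → Bool) : Set (Fin n → ℂ) :=
  {w | ∃ lam z : Fin n → ℂ, (∀ j, ‖lam j‖ ≤ 1) ∧ z ∈ G ∧
      w = fun j => (if ε j then lam j else 1) * z j}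

/-- The `n`-circled set `{|z^α| < c}`. -/
def monomialLt {n : ℕ} (α : Fin n → ℤ) (c : ℝ) : Set (Fin n → ℂ) :=
  {z | ∏ j ∈ Finset.univ.filter (fun j => 0 < α j), ‖z j‖ ^ (α j).toNat
     < c * ∏ j ∈ Finset.univ.filter (fun j => α j < 0), ‖z j‖ ^ (-(α j)).toNat}

/-- `f` has Laurent expansion on `G` with coefficients `a`. -/
def HasLaurent {n : ℕ} (G : Set (Fin n → ℂ)) (f : (Fin n → ℂ) → ℂ)
    (a : (Fin n → ℤ) → ℂ) : Prop :=
  ∀ z ∈ G, HasSum (fun ν : Fin n → ℤ => a ν * ∏ j, z j ^ ν j) (f z)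


/-!
Let the torus act on `ℂⁿ` by `θ • z = (e^{iθ_j} z_j)_j`. Integrating the Laurent series of `f`
along an orbit against the character `e^{-i⟨ν, θ⟩}` kills every term but one:
`(2π)ⁿ a_ν z^ν = ∫ e^{-i⟨ν, θ⟩} f(θ • z) dθ`. By Jensen, `|a_ν z^ν|^p` is then at most the orbit
average of `|f|^p`; integrating over `G`, swapping the integrals and using that each rotation
preserves `G` and Lebesgue measure gives the `L^p` bound. If `f ≢ 0`, some `a_{ν₀} ≠ 0`, so
`z^{ν₀} ∈ L^p(G)`. The same formula bounds `|a_{ν₀} z^{ν₀}|` by `sup |f|` over the orbit, hence near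
any point of `G`, which rules out `z_j = 0` on `G` when `ν₀_j < 0`.
-/

theorem rpow_lintegral_le_lintegral_rpow_mul_measure_univ {α : Type*} [MeasurableSpace α]
    (μ : Measure α) {g : α → ℝ≥0∞} (hg : AEMeasurable g μ) {p : ℝ} (hp : 1 ≤ p) :
    (∫⁻ x, g x ∂μ) ^ p ≤ (∫⁻ x, g x ^ p ∂μ) * μ univ ^ (p - 1) := by
  rcases hp.eq_or_lt with rfl | hp
  · simp
  have hp₀ : 0 < p := zero_lt_one.trans hp
  have hHolder := ENNReal.lintegral_mul_le_Lp_mul_Lq μ (.conjExponent hp) hg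
    (aemeasurable_const (b := 1))
  simp only [Pi.mul_apply, mul_one, one_mul, ENNReal.one_rpow, lintegral_const] at hHolder
  have hexp : 1 / p.conjExponent * p = p - 1 := by
    rw [Real.conjExponent]
    field_simp
  calc (∫⁻ x, g x ∂μ) ^ p
      ≤ ((∫⁻ x, g x ^ p ∂μ) ^ (1 / p) * μ univ ^ (1 / p.conjExponent)) ^ p :=
        ENNReal.rpow_le_rpow hHolder hp₀.le
    _ = (∫⁻ x, g x ^ p ∂μ) * μ univ ^ (p - 1) := by
        rw [ENNReal.mul_rpow_of_nonneg _ _ hp₀.le, ← ENNReal.rpow_mul, ← ENNReal.rpow_mul,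
          one_div_mul_cancel hp₀.ne', ENNReal.rpow_one, hexp]

theorem Real.tendsto_zpow_nhdsGT_zero_atTop {m : ℤ} (hm : m < 0) :
    Tendsto (fun t : ℝ => t ^ m) (𝓝[>] 0) atTop := by
  refine ((tendsto_zpow_atTop_atTop (neg_pos.mpr hm)).comp tendsto_inv_nhdsGT_zero).congr
    fun t => ?_
  simp [inv_zpow']

theorem MeasureTheory.MemLp.of_lintegral_rpow_enorm_le {α E F : Type*} [MeasurableSpace α]
    {μ : Measure α} [NormedAddCommGroup E] [NormedAddCommGroup F] {f : α → E} {g : α → F}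
    {p : ℝ} (hp : 0 < p) (hf : MemLp f (.ofReal p) μ) (hg : AEStronglyMeasurable g μ)
    (h : ∫⁻ x, ‖g x‖ₑ ^ p ∂μ ≤ ∫⁻ x, ‖f x‖ₑ ^ p ∂μ) : MemLp g (.ofReal p) μ := by
  refine ⟨hg, lt_of_le_of_lt ?_ hf.2⟩
  have hp' : ENNReal.ofReal p ≠ 0 := by simpa using hp
  rw [eLpNorm_eq_lintegral_rpow_enorm_toReal hp' ENNReal.ofReal_ne_top,
    eLpNorm_eq_lintegral_rpow_enorm_toReal hp' ENNReal.ofReal_ne_top,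
    ENNReal.toReal_ofReal hp.le]
  exact ENNReal.rpow_le_rpow h (by positivity)

namespace Reinhardt

open Complex Real Function

variable {n : ℕ} {G : Set (Fin n → ℂ)} {f : (Fin n → ℂ) → ℂ} {a : (Fin n → ℤ) → ℂ}

def rotate (θ : Fin n → ℝ) (z : Fin n → ℂ) : Fin n → ℂ :=
  fun j => exp (θ j * I) * z j

theorem measurePreserving_rotate (θ : Fin n → ℝ) : MeasurePreserving (rotate θ) :=
  volume_preserving_pi fun j => (rotation (Circle.exp (θ j))).measurePreserving

theorem continuous_rotate_uncurry :
    Continuous fun q : (Fin n → ℝ) × (Fin n → ℂ) => rotate q.1 q.2 := by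
  unfold rotate
  fun_prop

theorem rotate_neg_rotate (θ : Fin n → ℝ) (z : Fin n → ℂ) : rotate (-θ) (rotate θ z) = z := by
  funext j
  simp only [rotate, Pi.neg_apply, ofReal_neg, ← mul_assoc, ← Complex.exp_add, neg_mul,
    neg_add_cancel, Complex.exp_zero, one_mul]

theorem _root_.IsCircled.rotate_mem (hG : IsCircled G) {z : Fin n → ℂ} (hz : z ∈ G)
    (θ : Fin n → ℝ) : rotate θ z ∈ G :=
  hG z hz θ

theorem _root_.IsCircled.preimage_rotate (hG : IsCircled G) (θ : Fin n → ℝ) :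
    rotate θ ⁻¹' G = G := by
  refine Set.Subset.antisymm (fun z hz => ?_) fun z hz => hG.rotate_mem hz θ
  simpa only [rotate_neg_rotate] using hG.rotate_mem hz (-θ)

def angleBox (n : ℕ) : Set (Fin n → ℝ) := univ.pi fun _ => Ioc 0 (2 * π)

theorem measurableSet_angleBox : MeasurableSet (angleBox n) :=
  .univ_pi fun _ => measurableSet_Ioc

theorem volume_angleBox : volume (angleBox n) = ENNReal.ofReal (2 * π) ^ n := by
  simp [angleBox, volume_pi_pi, Real.volume_Ioc]

theorem volume_angleBox_ne_zero : volume (angleBox n) ≠ 0 := by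
  simp [volume_angleBox, pi_pos]

theorem volume_angleBox_ne_top : volume (angleBox n) ≠ ⊤ := by
  rw [volume_angleBox]
  exact ENNReal.pow_ne_top ENNReal.ofReal_ne_top

theorem volume_real_angleBox : volume.real (angleBox n) = (2 * π) ^ n := by
  simp [Measure.real, volume_angleBox, pi_pos.le]

instance : IsFiniteMeasure (volume.restrict (angleBox n)) :=
  isFiniteMeasure_restrict.mpr volume_angleBox_ne_top

def torusChar (m : Fin n → ℤ) (θ : Fin n → ℝ) : ℂ :=
  ∏ j, exp (m j * θ j * I)

theorem torusChar_add (m m' : Fin n → ℤ) (θ : Fin n → ℝ) :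
    torusChar (m + m') θ = torusChar m θ * torusChar m' θ := by
  simp only [torusChar, ← Finset.prod_mul_distrib, ← Complex.exp_add, Pi.add_apply, Int.cast_add,
    add_mul]

theorem norm_torusChar (m : Fin n → ℤ) (θ : Fin n → ℝ) : ‖torusChar m θ‖ = 1 := by
  simp only [torusChar, norm_prod]
  exact Finset.prod_eq_one fun j _ => by exact_mod_cast norm_exp_ofReal_mul_I (m j * θ j)

theorem enorm_torusChar (m : Fin n → ℤ) (θ : Fin n → ℝ) : ‖torusChar m θ‖ₑ = 1 := by
  rw [← ofReal_norm, norm_torusChar, ENNReal.ofReal_one]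

theorem continuous_torusChar (m : Fin n → ℤ) : Continuous (torusChar m) := by
  unfold torusChar
  fun_prop

theorem prod_rotate_zpow (θ : Fin n → ℝ) (z : Fin n → ℂ) (μ : Fin n → ℤ) :
    ∏ j, rotate θ z j ^ μ j = torusChar μ θ * ∏ j, z j ^ μ j := by
  simp only [rotate, torusChar, mul_zpow, Finset.prod_mul_distrib, mul_assoc, exp_int_mul]

theorem setIntegral_exp_int_mul_I (m : ℤ) :
    ∫ t in Ioc 0 (2 * π), exp (m * t * I) = if m = 0 then ((2 * π : ℝ) : ℂ) else 0 := by
  split_ifs with hm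
  · simp [hm, two_pi_pos.le]
  have hmI : (m : ℂ) * I ≠ 0 := by simp [hm, I_ne_zero]
  rw [← intervalIntegral.integral_of_le two_pi_pos.le]
  simp_rw [mul_right_comm _ _ I]
  rw [integral_exp_mul_complex hmI]
  have : (m : ℂ) * I * ((2 * π : ℝ) : ℂ) = m * (2 * π * I) := by push_cast; ring
  rw [this, exp_int_mul_two_pi_mul_I]
  simp

theorem setIntegral_torusChar (m : Fin n → ℤ) :
    ∫ θ in angleBox n, torusChar m θ = if m = 0 then ((2 * π : ℝ) : ℂ) ^ n else 0 := by
  unfold torusChar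
  rw [angleBox, volume_pi, Measure.restrict_pi_pi,
    integral_fintype_prod_eq_prod (fun j (t : ℝ) => exp (m j * t * I))]
  simp only [setIntegral_exp_int_mul_I, Finset.prod_ite_zero, Finset.mem_univ, true_implies,
    Finset.prod_const, Finset.card_univ, Fintype.card_fin, funext_iff, Pi.zero_apply]

theorem setIntegral_torusChar_mul_comp_rotate (hG : IsCircled G) (ha : HasLaurent G f a)
    (ν : Fin n → ℤ) {z : Fin n → ℂ} (hz : z ∈ G) :
    ∫ θ in angleBox n, torusChar (-ν) θ * f (rotate θ z) =
      ((2 * π : ℝ) : ℂ) ^ n * (a ν * ∏ j, z j ^ ν j) := by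
  set c : (Fin n → ℤ) → ℂ := fun μ => a μ * ∏ j, z j ^ μ j
  have hsum (θ : Fin n → ℝ) :
      HasSum (fun μ => c μ * torusChar (μ - ν) θ) (torusChar (-ν) θ * f (rotate θ z)) := by
    refine ((ha _ (hG.rotate_mem hz θ)).mul_left (torusChar (-ν) θ)).congr_fun fun μ => ?_
    rw [prod_rotate_zpow, sub_eq_neg_add, torusChar_add]
    ring
  have hint (μ : Fin n → ℤ) : Integrable (fun θ => c μ * torusChar (μ - ν) θ)
      (volume.restrict (angleBox n)) :=
    (integrable_const (c μ)).mul_of_top_left <|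
      memLp_top_of_bound (continuous_torusChar _).aestronglyMeasurable 1
        (.of_forall fun θ => (norm_torusChar _ θ).le)
  have hnorm : Summable fun μ => ∫ θ in angleBox n, ‖c μ * torusChar (μ - ν) θ‖ := by
    simp only [norm_mul, norm_torusChar, mul_one, integral_const, smul_eq_mul]
    exact (summable_norm_iff.mpr (ha z hz).summable).mul_left _
  simp_rw [← (hsum _).tsum_eq]
  rw [← integral_tsum_of_summable_integral_norm hint hnorm]
  simp_rw [integral_const_mul, setIntegral_torusChar, sub_eq_zero, mul_ite, mul_zero]
  rw [tsum_ite_eq, mul_comm]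

theorem enorm_laurentTerm_rpow_mul_volume_le (hG : IsCircled G) (hfc : ContinuousOn f G)
    (ha : HasLaurent G f a) {p : ℝ} (hp : 1 ≤ p) (ν : Fin n → ℤ) {z : Fin n → ℂ} (hz : z ∈ G) :
    ‖a ν * ∏ j, z j ^ ν j‖ₑ ^ p * volume (angleBox n) ≤
      ∫⁻ θ in angleBox n, ‖f (rotate θ z)‖ₑ ^ p := by
  have hp₀ : 0 < p := zero_lt_one.trans_le hp
  have hcont : Continuous fun θ => f (rotate θ z) :=
    hfc.comp_continuous (continuous_rotate_uncurry.comp (.prodMk_left z))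
      fun θ => hG.rotate_mem hz θ
  have hmean : ‖a ν * ∏ j, z j ^ ν j‖ₑ * volume (angleBox n) ≤
      ∫⁻ θ in angleBox n, ‖f (rotate θ z)‖ₑ := calc
    _ = ‖∫ θ in angleBox n, torusChar (-ν) θ * f (rotate θ z)‖ₑ := by
        rw [setIntegral_torusChar_mul_comp_rotate hG ha ν hz, enorm_mul (_ ^ n), enorm_pow,
          ← ofReal_norm (((2 * π : ℝ) : ℂ)), Complex.norm_real,
          Real.norm_of_nonneg two_pi_pos.le, volume_angleBox, mul_comm]
    _ ≤ ∫⁻ θ in angleBox n, ‖torusChar (-ν) θ * f (rotate θ z)‖ₑ :=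
        enorm_integral_le_lintegral_enorm _
    _ = ∫⁻ θ in angleBox n, ‖f (rotate θ z)‖ₑ := by
        simp only [enorm_mul, enorm_torusChar, one_mul]
  have hJensen := rpow_lintegral_le_lintegral_rpow_mul_measure_univ (volume.restrict (angleBox n))
    hcont.enorm.aemeasurable hp
  rw [Measure.restrict_apply_univ] at hJensen
  have hVp : volume (angleBox n) ^ p = volume (angleBox n) * volume (angleBox n) ^ (p - 1) := by
    conv_lhs => rw [show p = 1 + (p - 1) by ring]
    rw [ENNReal.rpow_add _ _ volume_angleBox_ne_zero volume_angleBox_ne_top, ENNReal.rpow_one]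
  refine (ENNReal.mul_le_mul_iff_left (c := volume (angleBox n) ^ (p - 1)) ?_ ?_).mp ?_
  · simp [ENNReal.rpow_eq_zero_iff, volume_angleBox_ne_zero, volume_angleBox_ne_top]
  · simp [ENNReal.rpow_eq_top_iff, volume_angleBox_ne_zero, volume_angleBox_ne_top]
  calc _ = (‖a ν * ∏ j, z j ^ ν j‖ₑ * volume (angleBox n)) ^ p := by
        rw [mul_assoc, ← hVp, ENNReal.mul_rpow_of_nonneg _ _ hp₀.le]
    _ ≤ (∫⁻ θ in angleBox n, ‖f (rotate θ z)‖ₑ) ^ p := ENNReal.rpow_le_rpow hmean hp₀.le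
    _ ≤ _ := hJensen

theorem setLIntegral_comp_rotate (hGm : MeasurableSet G) (hG : IsCircled G)
    {g : (Fin n → ℂ) → ℝ≥0∞} (hg : AEMeasurable g (volume.restrict G)) (θ : Fin n → ℝ) :
    ∫⁻ z in G, g (rotate θ z) = ∫⁻ z in G, g z := by
  have hmp : MeasurePreserving (rotate θ) (volume.restrict G) (volume.restrict G) := by
    simpa only [hG.preimage_rotate] using (measurePreserving_rotate θ).restrict_preimage hGm
  rw [← lintegral_map' (by rwa [hmp.map_eq]) hmp.measurable.aemeasurable, hmp.map_eq]

theorem lintegral_laurentTerm_rpow_le (hGm : MeasurableSet G) (hG : IsCircled G)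
    (hfc : ContinuousOn f G) (ha : HasLaurent G f a) {p : ℝ} (hp : 1 ≤ p) (ν : Fin n → ℤ) :
    ∫⁻ z in G, ‖a ν * ∏ j, z j ^ ν j‖ₑ ^ p ≤ ∫⁻ z in G, ‖f z‖ₑ ^ p := by
  let F : (Fin n → ℂ) → (Fin n → ℝ) → ℝ≥0∞ := fun z θ => ‖f (rotate θ z)‖ₑ ^ p
  have hF : AEMeasurable (Function.uncurry F)
      ((volume.restrict G).prod (volume.restrict (angleBox n))) := by
    rw [Measure.prod_restrict]
    refine ((hfc.comp (continuous_rotate_uncurry.comp continuous_swap).continuousOn ?_).aemeasurable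
      (hGm.prod measurableSet_angleBox)).enorm.pow_const p
    rintro ⟨z, θ⟩ ⟨hz, -⟩
    exact hG.rotate_mem hz θ
  refine (ENNReal.mul_le_mul_iff_left (volume_angleBox_ne_zero (n := n))
    volume_angleBox_ne_top).mp ?_
  calc (∫⁻ z in G, ‖a ν * ∏ j, z j ^ ν j‖ₑ ^ p) * volume (angleBox n)
      = ∫⁻ z in G, ‖a ν * ∏ j, z j ^ ν j‖ₑ ^ p * volume (angleBox n) :=
        (lintegral_mul_const' _ _ volume_angleBox_ne_top).symm
    _ ≤ ∫⁻ z in G, ∫⁻ θ in angleBox n, F z θ :=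
        setLIntegral_mono' hGm fun z hz => enorm_laurentTerm_rpow_mul_volume_le hG hfc ha hp ν hz
    _ = ∫⁻ θ in angleBox n, ∫⁻ z in G, F z θ := lintegral_lintegral_swap hF
    _ = (∫⁻ z in G, ‖f z‖ₑ ^ p) * volume (angleBox n) := by
        simp only [F, setLIntegral_comp_rotate hGm hG ((hfc.aemeasurable hGm).enorm.pow_const p),
          lintegral_const, Measure.restrict_apply_univ]

theorem norm_laurentTerm_le_of_forall_norm_le (hG : IsCircled G) (ha : HasLaurent G f a)
    (ν : Fin n → ℤ) {z : Fin n → ℂ} (hz : z ∈ G) {M : ℝ}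
    (hM : ∀ θ ∈ angleBox n, ‖f (rotate θ z)‖ ≤ M) : ‖a ν * ∏ j, z j ^ ν j‖ ≤ M := by
  have h := norm_setIntegral_le_of_norm_le_const volume_angleBox_ne_top.lt_top
    (f := fun θ => torusChar (-ν) θ * f (rotate θ z)) fun θ hθ => by
    rw [norm_mul, norm_torusChar, one_mul]
    exact hM θ hθ
  rw [setIntegral_torusChar_mul_comp_rotate hG ha ν hz, volume_real_angleBox, norm_mul, norm_pow,
    Complex.norm_real, Real.norm_of_nonneg two_pi_pos.le, mul_comm M] at h
  exact le_of_mul_le_mul_left h (pow_pos two_pi_pos n)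

theorem eq_zero_of_norm_mul_prod_zpow_le {c : ℂ} {ν : Fin n → ℤ} {j : Fin n} (hν : ν j < 0)
    {z₀ : Fin n → ℂ} (hz₀ : z₀ j = 0) {δ M : ℝ} (hδ : 0 < δ)
    (hM : ∀ w ∈ Metric.closedBall z₀ δ, ‖c * ∏ k, w k ^ ν k‖ ≤ M) : c = 0 := by
  classical
  -- Push the other vanishing coordinates to `δ`, then let the `j`-th one tend to `0`.
  set u : Fin n → ℂ := fun k => if z₀ k = 0 then (δ : ℂ) else z₀ k
  set C := ∏ k ∈ Finset.univ \ {j}, ‖u k‖ ^ ν k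
  have hC : 0 < C := Finset.prod_pos fun k _ => zpow_pos (norm_pos_iff.mpr (by
    by_cases hk : z₀ k = 0 <;> simp [u, hk, hδ.ne'])) _
  have hmem (t : ℝ) (ht : t ∈ Ioc 0 δ) : update u j (t : ℂ) ∈ Metric.closedBall z₀ δ := by
    refine (dist_pi_le_iff hδ.le).mpr fun k => ?_
    rcases eq_or_ne k j with rfl | hkj
    · simpa [hz₀, abs_of_pos ht.1] using ht.2
    · by_cases hk : z₀ k = 0 <;> simp [u, hkj, hk, abs_of_pos hδ, hδ.le]
  have hnorm (t : ℝ) (ht : 0 < t) :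
      ‖c * ∏ k, update u j (t : ℂ) k ^ ν k‖ = ‖c‖ * C * t ^ ν j := by
    have hcoord (k : Fin n) :
        ‖update u j (t : ℂ) k ^ ν k‖ = update (fun k => ‖u k‖ ^ ν k) j (t ^ ν j) k := by
      rcases eq_or_ne k j with rfl | hkj
      · simp [abs_of_pos ht]
      · simp [hkj]
    rw [norm_mul, norm_prod, Finset.prod_congr rfl fun k _ => hcoord k,
      Finset.prod_update_of_mem (Finset.mem_univ j)]
    ring
  by_contra hc
  have hblow : Tendsto (fun t : ℝ => ‖c‖ * C * t ^ ν j) (𝓝[>] 0) atTop :=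
    (Real.tendsto_zpow_nhdsGT_zero_atTop hν).const_mul_atTop (by positivity)
  obtain ⟨t, hMt, ht⟩ := ((hblow.eventually_gt_atTop M).and (Ioc_mem_nhdsGT hδ)).exists
  exact (hM _ (hmem t ht)).not_gt (hnorm t ht.1 ▸ hMt)

theorem laurentCoeff_eq_zero_of_apply_eq_zero (hGo : IsOpen G) (hG : IsCircled G)
    (hfc : ContinuousOn f G) (ha : HasLaurent G f a) {ν : Fin n → ℤ} {j : Fin n} (hν : ν j < 0)
    {z₀ : Fin n → ℂ} (hz₀G : z₀ ∈ G) (hz₀ : z₀ j = 0) : a ν = 0 := by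
  obtain ⟨δ, hδ, hδG⟩ := Metric.nhds_basis_closedBall.mem_iff.mp (hGo.mem_nhds hz₀G)
  set K := (fun q : (Fin n → ℝ) × (Fin n → ℂ) => rotate q.1 q.2) ''
    ((univ.pi fun _ => Icc 0 (2 * π)) ×ˢ Metric.closedBall z₀ δ)
  have hK : IsCompact K := ((isCompact_univ_pi fun _ => isCompact_Icc).prod
    (isCompact_closedBall z₀ δ)).image continuous_rotate_uncurry
  have hKG : K ⊆ G := by
    rintro _ ⟨⟨θ, w⟩, ⟨-, hw⟩, rfl⟩
    exact hG.rotate_mem (hδG hw) θ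
  obtain ⟨M, hM⟩ := hK.exists_bound_of_continuousOn (hfc.mono hKG)
  refine eq_zero_of_norm_mul_prod_zpow_le (M := M) hν hz₀ hδ fun w hw => ?_
  refine norm_laurentTerm_le_of_forall_norm_le hG ha ν (hδG hw) fun θ hθ => hM _ ?_
  exact ⟨(θ, w), ⟨fun k _ => Ioc_subset_Icc_self (hθ k trivial), hw⟩, rfl⟩

theorem _root_.HasLaurent.exists_coeff_ne_zero (ha : HasLaurent G f a) {z : Fin n → ℂ}
    (hz : z ∈ G) (hfz : f z ≠ 0) : ∃ ν, a ν ≠ 0 := by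
  by_contra! h
  exact hfz ((ha z hz).unique (by simp [h]))

end Reinhardt

/-- `L^p`-bounds for the Laurent terms of an `L^p` holomorphic function. -/
theorem stmt9 {n : ℕ} (G : Set (Fin n → ℂ)) (hdom : IsDomainSet G) (hcirc : IsCircled G)
    (p : ℝ) (hp : 1 ≤ p) (f : (Fin n → ℂ) → ℂ) (hf : DifferentiableOn ℂ f G)
    (hfp : MemLp f (ENNReal.ofReal p) (volume.restrict G))
    (a : (Fin n → ℤ) → ℂ) (ha : HasLaurent G f a) :
    (∀ ν : Fin n → ℤ,
      ∫⁻ z in G, (‖a ν * ∏ j, z j ^ ν j‖₊ : ℝ≥0∞) ^ p ≤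
        ∫⁻ z in G, (‖f z‖₊ : ℝ≥0∞) ^ p) ∧
    ((∃ z ∈ G, f z ≠ 0) → ∃ ν₀ : Fin n → ℤ,
      (∀ j, ν₀ j < 0 → ∀ z ∈ G, z j ≠ 0) ∧
      MemLp (fun z : Fin n → ℂ => ∏ j, z j ^ ν₀ j) (ENNReal.ofReal p)
        (volume.restrict G)) := by
  have hbound (ν : Fin n → ℤ) :=
    Reinhardt.lintegral_laurentTerm_rpow_le hdom.1.measurableSet hcirc hf.continuousOn ha hp ν
  refine ⟨hbound, fun ⟨z₁, hz₁, hfz₁⟩ => ?_⟩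
  obtain ⟨ν₀, hν₀⟩ := ha.exists_coeff_ne_zero hz₁ hfz₁
  refine ⟨ν₀, fun j hj z hz hzj => hν₀ <|
    Reinhardt.laurentCoeff_eq_zero_of_apply_eq_zero hdom.1 hcirc hf.continuousOn ha hj hz hzj, ?_⟩
  have hterm : MemLp (fun z => a ν₀ * ∏ j, z j ^ ν₀ j) (.ofReal p) (volume.restrict G) :=
    hfp.of_lintegral_rpow_enorm_le (by linarith)
      (Measurable.aestronglyMeasurable (by fun_prop)) (hbound ν₀)
  simpa [hν₀] using hterm.const_mul (a ν₀)⁻¹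
end
end

section
/- Let α_1,…,α_n ∈ ℤ^n be ℝ-linearly independent, U := {z ∈ ℂ^n : z_ℓ ≠ 0 whenever α_{j,ℓ} < 0 for some j}, and D := {z ∈ U : |z^{α_j}| < 1, j = 1,…,n}. If ν ∈ ℤ^n lies in the convex cone ℝ_+α_1 + ⋯ + ℝ_+α_n, then |z^ν| ≤ 1 for all z ∈ D. If moreover ν − e_ℓ ∈ ℝ_+α_1 + ⋯ + ℝ_+α_n for some ℓ (e_ℓ the ℓ-th standard basis vector of ℝ^n), then |z^ν| ≤ |z_ℓ| on D, and consequently z^ν(z) → 0 as D ∋ z → z_0 for every z_0 ∈ ∂D with z_{0,ℓ} = 0. -/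
open MeasureTheory Filter Topology Set
open scoped ENNReal

noncomputable section

/-!
Write `x_ℓ = |z_ℓ|`. If `ν = ∑ t_j α_j` with `t_j ≥ 0`, then `x^ν = ∏_j (x^{α_j})^{t_j}`, a product of
numbers in `[0, 1]` on `D`. The coordinates with `x_ℓ = 0` cause no trouble: there every `α_{j,ℓ}` is
nonnegative, so the real powers involved stay multiplicative. Applying this to `ν - e_ℓ` gives
`x^ν = x^{ν - e_ℓ} x_ℓ ≤ x_ℓ`, and the last claim follows by squeezing.
-/

section MonomialCone

variable {ι κ : Type*} [Fintype ι] [Fintype κ]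

lemma prod_rpow_sum_mul_eq {x : ι → ℝ} (hx : ∀ ℓ, 0 ≤ x ℓ) {a : κ → ι → ℝ}
    (ha : ∀ ℓ, x ℓ = 0 → ∀ j, 0 ≤ a j ℓ) {t : κ → ℝ} (ht : ∀ j, 0 ≤ t j) :
    ∏ ℓ, x ℓ ^ (∑ j, t j * a j ℓ) = ∏ j, (∏ ℓ, x ℓ ^ a j ℓ) ^ t j := by
  have hsum : ∀ ℓ, x ℓ ^ (∑ j, t j * a j ℓ) = ∏ j, x ℓ ^ (t j * a j ℓ) := by
    intro ℓ
    rcases (hx ℓ).eq_or_lt with hzero | hpos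
    · exact Real.rpow_sum_of_nonneg (hx ℓ) fun j _ => mul_nonneg (ht j) (ha ℓ hzero.symm j)
    · exact Real.rpow_sum_of_pos hpos _ _
  calc ∏ ℓ, x ℓ ^ (∑ j, t j * a j ℓ) = ∏ j, ∏ ℓ, (x ℓ ^ a j ℓ) ^ t j := by
        simp_rw [hsum, mul_comm (t _), Real.rpow_mul (hx _)]
        exact Finset.prod_comm
    _ = ∏ j, (∏ ℓ, x ℓ ^ a j ℓ) ^ t j := by
        simp_rw [Real.finsetProd_rpow _ _ fun ℓ _ => Real.rpow_nonneg (hx ℓ) _]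

lemma prod_rpow_le_one_of_mem_cone {x : ι → ℝ} (hx : ∀ ℓ, 0 ≤ x ℓ) {a : κ → ι → ℝ}
    (ha : ∀ ℓ, x ℓ = 0 → ∀ j, 0 ≤ a j ℓ) (hP : ∀ j, ∏ ℓ, x ℓ ^ a j ℓ ≤ 1)
    {t : κ → ℝ} (ht : ∀ j, 0 ≤ t j) :
    ∏ ℓ, x ℓ ^ (∑ j, t j * a j ℓ) ≤ 1 := by
  rw [prod_rpow_sum_mul_eq hx ha ht]
  have hP₀ : ∀ j, 0 ≤ ∏ ℓ, x ℓ ^ a j ℓ := fun j =>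
    Finset.prod_nonneg fun ℓ _ => Real.rpow_nonneg (hx ℓ) _
  exact Finset.prod_le_one (fun j _ => Real.rpow_nonneg (hP₀ j) _)
    fun j _ => Real.rpow_le_one (hP₀ j) (hP j) (ht j)

lemma prod_zpow_le_one_of_mem_cone {x : ι → ℝ} (hx : ∀ ℓ, 0 ≤ x ℓ) {α : κ → ι → ℤ}
    (hα : ∀ ℓ, x ℓ = 0 → ∀ j, 0 ≤ α j ℓ) (hP : ∀ j, ∏ ℓ, x ℓ ^ α j ℓ ≤ 1)
    {t : κ → ℝ} (ht : ∀ j, 0 ≤ t j) {ν : ι → ℤ}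
    (hν : ∀ ℓ, (ν ℓ : ℝ) = ∑ j, t j * (α j ℓ : ℝ)) :
    ∏ ℓ, x ℓ ^ ν ℓ ≤ 1 := by
  simp_rw [← Real.rpow_intCast, hν] at hP ⊢
  exact prod_rpow_le_one_of_mem_cone hx (fun ℓ h j => Int.cast_nonneg (hα ℓ h j)) hP ht

lemma prod_zpow_le_of_sub_single_mem_cone [DecidableEq ι] {x : ι → ℝ} (hx : ∀ ℓ, 0 ≤ x ℓ)
    {α : κ → ι → ℤ} (hα : ∀ ℓ, x ℓ = 0 → ∀ j, 0 ≤ α j ℓ) (hP : ∀ j, ∏ ℓ, x ℓ ^ α j ℓ ≤ 1)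
    {t : κ → ℝ} (ht : ∀ j, 0 ≤ t j) {ν : ι → ℤ} {ℓ₀ : ι}
    (hν : ∀ ℓ, (ν ℓ : ℝ) - (if ℓ = ℓ₀ then 1 else 0) = ∑ j, t j * (α j ℓ : ℝ)) :
    ∏ ℓ, x ℓ ^ ν ℓ ≤ x ℓ₀ := by
  set e : ι → ℤ := fun ℓ => if ℓ = ℓ₀ then 1 else 0
  have hμ : ∀ ℓ, ((ν ℓ - e ℓ : ℤ) : ℝ) = ∑ j, t j * (α j ℓ : ℝ) := fun ℓ => by
    rw [← hν ℓ]; split_ifs <;> simp [e, *]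
  have hsplit : ∀ ℓ, x ℓ ^ ν ℓ = x ℓ ^ (ν ℓ - e ℓ) * x ℓ ^ e ℓ := fun ℓ => by
    rw [← zpow_add', sub_add_cancel]
    by_cases hzero : x ℓ = 0
    · have : 0 ≤ ν ℓ - e ℓ := by
        have := Finset.sum_nonneg fun j (_ : j ∈ Finset.univ) =>
          mul_nonneg (ht j) (Int.cast_nonneg (hα ℓ hzero j))
        exact_mod_cast (hμ ℓ).symm ▸ this
      simp only [e] at this ⊢
      split_ifs at this ⊢ <;> omega
    · exact Or.inl hzero
  calc ∏ ℓ, x ℓ ^ ν ℓ = (∏ ℓ, x ℓ ^ (ν ℓ - e ℓ)) * x ℓ₀ := by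
        rw [Finset.prod_congr rfl fun ℓ _ => hsplit ℓ, Finset.prod_mul_distrib]
        simp [e, apply_ite]
    _ ≤ x ℓ₀ := mul_le_of_le_one_left (hx ℓ₀) (prod_zpow_le_one_of_mem_cone hx hα hP ht hμ)

end MonomialCone

lemma tendsto_nhdsWithin_zero_of_norm_le_norm_apply {ι E F : Type*} [Fintype ι]
    [NormedAddCommGroup E] [NormedAddCommGroup F] {f : (ι → E) → F} {D : Set (ι → E)}
    {ℓ₀ : ι} (hf : ∀ z ∈ D, ‖f z‖ ≤ ‖z ℓ₀‖) {z₀ : ι → E} (hz₀ : z₀ ℓ₀ = 0) :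
    Tendsto f (𝓝[D] z₀) (𝓝 0) := by
  refine squeeze_zero_norm' (eventually_nhdsWithin_of_forall hf) ?_
  have : Tendsto (fun z : ι → E => ‖z ℓ₀‖) (𝓝 z₀) (𝓝 ‖z₀ ℓ₀‖) :=
    ((continuous_apply ℓ₀).norm).tendsto z₀
  rw [hz₀, norm_zero] at this
  exact this.mono_left nhdsWithin_le_nhds

theorem stmt12_general {n : ℕ} (α : Fin n → Fin n → ℤ)
    (ν : Fin n → ℤ) (D : Set (Fin n → ℂ))
    (hD : D = {z : Fin n → ℂ | (∀ ℓ, (∃ j, α j ℓ < 0) → z ℓ ≠ 0) ∧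
        ∀ j, (∏ ℓ, ‖z ℓ‖ ^ (α j ℓ)) < 1}) :
    ((∃ t : Fin n → ℝ, (∀ j, 0 ≤ t j) ∧
        ∀ ℓ, (ν ℓ : ℝ) = ∑ j, t j * (α j ℓ : ℝ)) →
      ∀ z ∈ D, (∏ j, ‖z j‖ ^ (ν j)) ≤ 1) ∧
    (∀ ℓ₀ : Fin n,
      (∃ t : Fin n → ℝ, (∀ j, 0 ≤ t j) ∧
        ∀ ℓ, (ν ℓ : ℝ) - (if ℓ = ℓ₀ then 1 else 0) = ∑ j, t j * (α j ℓ : ℝ)) →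
      (∀ z ∈ D, (∏ j, ‖z j‖ ^ (ν j)) ≤ ‖z ℓ₀‖) ∧
      (∀ z₀ ∈ frontier D, z₀ ℓ₀ = 0 →
        Tendsto (fun z : Fin n → ℂ => ∏ j, z j ^ (ν j)) (nhdsWithin z₀ D) (nhds 0))) := by
  have hmemD : ∀ z ∈ D, (∀ ℓ, ‖z ℓ‖ = 0 → ∀ j, 0 ≤ α j ℓ) ∧ ∀ j, ∏ ℓ, ‖z ℓ‖ ^ α j ℓ ≤ 1 := by
    rw [hD]
    rintro z ⟨hz_ne, hz_lt⟩
    refine ⟨fun ℓ hℓ j => ?_, fun j => (hz_lt j).le⟩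
    by_contra! hneg
    exact hz_ne ℓ ⟨j, hneg⟩ (norm_eq_zero.mp hℓ)
  have hbound : ∀ ℓ₀, (∃ t : Fin n → ℝ, (∀ j, 0 ≤ t j) ∧
      ∀ ℓ, (ν ℓ : ℝ) - (if ℓ = ℓ₀ then 1 else 0) = ∑ j, t j * (α j ℓ : ℝ)) →
      ∀ z ∈ D, ∏ j, ‖z j‖ ^ ν j ≤ ‖z ℓ₀‖ := fun ℓ₀ ⟨t, ht, hν⟩ z hz =>
    prod_zpow_le_of_sub_single_mem_cone (fun _ => norm_nonneg _) (hmemD z hz).1 (hmemD z hz).2 ht hν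
  refine ⟨fun ⟨t, ht, hν⟩ z hz =>
    prod_zpow_le_one_of_mem_cone (fun _ => norm_nonneg _) (hmemD z hz).1 (hmemD z hz).2 ht hν,
    fun ℓ₀ hcone => ⟨hbound ℓ₀ hcone, fun z₀ _ hz₀ => ?_⟩⟩
  refine tendsto_nhdsWithin_zero_of_norm_le_norm_apply (fun z hz => ?_) hz₀
  simpa [norm_prod, norm_zpow] using hbound ℓ₀ hcone z hz

/-- Monomials with exponent in the cone `ℝ₊α₁ + ⋯ + ℝ₊αₙ` are bounded by `1` on `D`,
and by `|z_ℓ|` if moreover `ν - e_ℓ` lies in the cone. -/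
theorem stmt12 {n : ℕ} (α : Fin n → Fin n → ℤ)
    (hind : LinearIndependent ℝ (fun j : Fin n => fun ℓ : Fin n => (α j ℓ : ℝ)))
    (ν : Fin n → ℤ) (D : Set (Fin n → ℂ))
    (hD : D = {z : Fin n → ℂ | (∀ ℓ, (∃ j, α j ℓ < 0) → z ℓ ≠ 0) ∧
        ∀ j, (∏ ℓ, ‖z ℓ‖ ^ (α j ℓ)) < 1}) :
    ((∃ t : Fin n → ℝ, (∀ j, 0 ≤ t j) ∧
        ∀ ℓ, (ν ℓ : ℝ) = ∑ j, t j * (α j ℓ : ℝ)) →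
      ∀ z ∈ D, (∏ j, ‖z j‖ ^ (ν j)) ≤ 1) ∧
    (∀ ℓ₀ : Fin n,
      (∃ t : Fin n → ℝ, (∀ j, 0 ≤ t j) ∧
        ∀ ℓ, (ν ℓ : ℝ) - (if ℓ = ℓ₀ then 1 else 0) = ∑ j, t j * (α j ℓ : ℝ)) →
      (∀ z ∈ D, (∏ j, ‖z j‖ ^ (ν j)) ≤ ‖z ℓ₀‖) ∧
      (∀ z₀ ∈ frontier D, z₀ ℓ₀ = 0 →
        Tendsto (fun z : Fin n → ℂ => ∏ j, z j ^ (ν j)) (nhdsWithin z₀ D) (nhds 0))) :=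
  stmt12_general α ν D hD
end
end

section
/- Let G ⊆ ℂ^n be a domain and let G_0, G̃ ⊆ ℂ^n be domains with ∅ ≠ G_0 ⊆ G ∩ G̃. Suppose that every g ∈ H^∞(G) ∩ O(cl G) admits a holomorphic g̃ on G̃ with g̃ = g on G_0. Then for every f ∈ H^∞(G) ∩ O(cl G) and every holomorphic f̃ on G̃ with f̃ = f on G_0, one has sup_{G̃} |f̃| ≤ sup_G |f|. -/
/-!
If `‖f̃ w‖ > C ≥ sup_G ‖f‖` for some `w ∈ G̃`, put `λ = f̃ w`. Then `g = 1 / (f - λ)` still lies in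
`H^∞(G) ∩ O(cl G)`, so it has an extension `g̃` to `G̃`. The function `g̃ · (f̃ - λ)` equals `1` on
`G₀`, hence on all of `G̃` by the identity theorem, yet it vanishes at `w`.
-/

open MeasureTheory Filter Topology Set
open scoped ENNReal

noncomputable section

section IdentityTheorem

variable {E F : Type*} [NormedAddCommGroup E] [NormedSpace ℂ E]
  [NormedAddCommGroup F] [NormedSpace ℂ F] [CompleteSpace F] {f g : E → F}

/-- On a convex open set the one-variable identity theorem applies along each complex line. -/
theorem DifferentiableOn.eqOn_of_convex_of_eventuallyEq {U : Set E} (hf : DifferentiableOn ℂ f U)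
    (hg : DifferentiableOn ℂ g U) (hUo : IsOpen U) (hUc : Convex ℝ U) {a : E} (ha : a ∈ U)
    (hfg : f =ᶠ[𝓝 a] g) : EqOn f g U := by
  intro w hw
  set L : ℂ → E := fun t => a + t • (w - a)
  have hL : Differentiable ℂ L := (differentiable_id.smul_const (w - a)).const_add a
  have hSo : IsOpen (L ⁻¹' U) := hUo.preimage hL.continuous
  have hSc : Convex ℝ (L ⁻¹' U) :=
    (hUc.translate_preimage_right a).linear_preimage
      ((LinearMap.toSpanSingleton ℂ E (w - a)).restrictScalars ℝ)
  have hS0 : (0 : ℂ) ∈ L ⁻¹' U := by simpa [L] using ha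
  have hS1 : (1 : ℂ) ∈ L ⁻¹' U := by simpa [L] using hw
  have hfL := (hf.comp hL.differentiableOn (mapsTo_preimage L U)).analyticOnNhd hSo
  have hgL := (hg.comp hL.differentiableOn (mapsTo_preimage L U)).analyticOnNhd hSo
  have hfgL : f ∘ L =ᶠ[𝓝 0] g ∘ L := (hL.continuous.tendsto' 0 a (by simp [L])).eventually hfg
  simpa [L] using hfL.eqOn_of_preconnected_of_eventuallyEq hgL hSc.isPreconnected hS0 hfgL hS1

theorem DifferentiableOn.eqOn_of_isPreconnected_of_eventuallyEq {U : Set E}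
    (hf : DifferentiableOn ℂ f U) (hg : DifferentiableOn ℂ g U) (hUo : IsOpen U)
    (hUc : IsPreconnected U) {a : E} (ha : a ∈ U) (hfg : f =ᶠ[𝓝 a] g) : EqOn f g U := by
  suffices hU : U ⊆ {z | f =ᶠ[𝓝 z] g} from fun z hz => (hU hz).self_of_nhds
  refine hUc.subset_of_closure_inter_subset isOpen_setOfPred_eventually_nhds ⟨a, ha, hfg⟩ ?_
  rintro z ⟨hz_cl, hzU⟩
  obtain ⟨r, hr, hball⟩ := Metric.isOpen_iff.1 hUo z hzU
  obtain ⟨b, hb, hbz⟩ := Metric.mem_closure_iff.1 hz_cl r hr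
  have hbball : b ∈ Metric.ball z r := by rwa [Metric.mem_ball, dist_comm]
  have hEq : EqOn f g (Metric.ball z r) :=
    (hf.mono hball).eqOn_of_convex_of_eventuallyEq (hg.mono hball) Metric.isOpen_ball
      (convex_ball z r) hbball hb
  exact eventuallyEq_of_mem (Metric.ball_mem_nhds z hr) hEq

end IdentityTheorem

section BoundedHolomorphic

variable {n : ℕ} {G : Set (Fin n → ℂ)} {f : (Fin n → ℂ) → ℂ} {C : ℝ} {c : ℂ}

theorem ContinuousOn.norm_le_on_closure {X E : Type*} [TopologicalSpace X]
    [SeminormedAddCommGroup E] {s : Set X} {F : X → E} (hF : ContinuousOn F (closure s))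
    (hC : ∀ z ∈ s, ‖F z‖ ≤ C) :
    ∀ z ∈ closure s, ‖F z‖ ≤ C := by
  intro z hz
  have hmem := ((hF z hz).mono subset_closure).mem_closure_image hz
  have himage : F '' s ⊆ Metric.closedBall 0 C := by
    rintro _ ⟨x, hx, rfl⟩
    simpa using hC x hx
  simpa using Metric.isClosed_closedBall.closure_subset_iff.2 himage hmem

theorem inv_sub_mem_Hinf (hf : DifferentiableOn ℂ f G) (hC : ∀ z ∈ G, ‖f z‖ ≤ C) (hc : C < ‖c‖) :
    (fun z => (f z - c)⁻¹) ∈ Hinf G := by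
  have hgap : ∀ z ∈ G, ‖c‖ - C ≤ ‖f z - c‖ := fun z hz => by
    linarith [hC z hz, norm_sub_norm_le c (f z), norm_sub_rev c (f z)]
  refine ⟨(hf.sub_const c).inv fun z hz => sub_ne_zero.2 (ne_of_apply_ne norm
    ((hC z hz).trans_lt hc).ne), (‖c‖ - C)⁻¹, fun z hz => ?_⟩
  rw [norm_inv]
  exact inv_anti₀ (by linarith) (hgap z hz)

theorem inv_sub_mem_Ocl (hf : f ∈ Ocl G) (hC : ∀ z ∈ G, ‖f z‖ ≤ C) (hc : C < ‖c‖) :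
    (fun z => (f z - c)⁻¹) ∈ Ocl G := by
  obtain ⟨U, hUo, hclU, F, hFd, hfF⟩ := hf
  have hCF : ∀ z ∈ closure G, ‖F z‖ ≤ C :=
    (hFd.continuousOn.mono hclU).norm_le_on_closure fun z hz => hfF hz ▸ hC z hz
  refine ⟨U ∩ {z | ‖F z‖ < ‖c‖},
    hFd.continuousOn.isOpen_inter_preimage hUo (isOpen_lt continuous_norm continuous_const),
    fun z hz => ⟨hclU hz, (hCF z hz).trans_lt hc⟩, fun z => (F z - c)⁻¹, ?_,
    fun z hz => by simp only [hfF hz]⟩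
  exact ((hFd.mono inter_subset_left).sub_const c).inv fun z hz =>
    sub_ne_zero.2 (ne_of_apply_ne norm hz.2.ne)

end BoundedHolomorphic

theorem stmt14_general {n : ℕ} (G G₀ Gt : Set (Fin n → ℂ))
    (hG0 : IsDomainSet G₀) (hGt : IsDomainSet Gt) (hne : G₀.Nonempty)
    (hsub : G₀ ⊆ G ∩ Gt)
    (hext : ∀ g ∈ Hinf G ∩ Ocl G,
      ∃ gt : (Fin n → ℂ) → ℂ, DifferentiableOn ℂ gt Gt ∧ Set.EqOn gt g G₀) :
    ∀ f ∈ Hinf G ∩ Ocl G, ∀ ft : (Fin n → ℂ) → ℂ,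
      DifferentiableOn ℂ ft Gt → Set.EqOn ft f G₀ →
      ∀ C : ℝ, (∀ z ∈ G, ‖f z‖ ≤ C) → ∀ w ∈ Gt, ‖ft w‖ ≤ C := by
  rintro f ⟨⟨hfd, -⟩, hfO⟩ ft hftd hfteq C hC w hw
  by_contra! hw_big
  obtain ⟨gt, hgtd, hgteq⟩ :=
    hext _ ⟨inv_sub_mem_Hinf hfd hC hw_big, inv_sub_mem_Ocl hfO hC hw_big⟩
  have hprod_one : EqOn (fun z => gt z * (ft z - ft w)) 1 G₀ := fun z hz => by
    have hne_zero : f z - ft w ≠ 0 :=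
      sub_ne_zero.2 (ne_of_apply_ne norm ((hC z (hsub hz).1).trans_lt hw_big).ne)
    simp only [hgteq hz, hfteq hz, Pi.one_apply, inv_mul_cancel₀ hne_zero]
  obtain ⟨a, ha⟩ := hne
  have hw_one := (hgtd.mul (hftd.sub_const _)).eqOn_of_isPreconnected_of_eventuallyEq
    (differentiableOn_const 1) hGt.1 hGt.2.isPreconnected (hsub ha).2
    (eventuallyEq_of_mem (hG0.1.mem_nhds ha) hprod_one) hw
  simp only [Pi.mul_apply, sub_self, mul_zero, zero_ne_one] at hw_one

/-- Extensions of functions in `H^∞(G) ∩ O(cl G)` obey the maximum norm bound. -/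
theorem stmt14 {n : ℕ} (G G₀ Gt : Set (Fin n → ℂ)) (hG : IsDomainSet G)
    (hG0 : IsDomainSet G₀) (hGt : IsDomainSet Gt) (hne : G₀.Nonempty)
    (hsub : G₀ ⊆ G ∩ Gt)
    (hext : ∀ g ∈ Hinf G ∩ Ocl G,
      ∃ gt : (Fin n → ℂ) → ℂ, DifferentiableOn ℂ gt Gt ∧ Set.EqOn gt g G₀) :
    ∀ f ∈ Hinf G ∩ Ocl G, ∀ ft : (Fin n → ℂ) → ℂ,
      DifferentiableOn ℂ ft Gt → Set.EqOn ft f G₀ →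
      ∀ C : ℝ, (∀ z ∈ G, ‖f z‖ ≤ C) → ∀ w ∈ Gt, ‖ft w‖ ≤ C :=
  stmt14_general G G₀ Gt hG0 hGt hne hsub hext
end
end

section
/- Let G ⊆ ℂ^n be an n-circled domain of holomorphy and set F := E(log G). Then for every f ∈ H^∞(G), the Laurent series of f has the form Σ_{ν ∈ F^⊥ ∩ ℤ^n} a_ν(f) z^ν; that is, a_ν(f) = 0 for every ν ∈ ℤ^n not orthogonal to F. -/
open MeasureTheory Filter Topology Set
open scoped ENNReal

noncomputable section

/-
Rotating a point `z ∈ G` coordinatewise by `N`-th roots of unity `ζ` and averaging `f` against the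
character `k ↦ ζ^{-⟨k, ν⟩}` keeps exactly the Laurent terms `a_μ z^μ` with `μ ≡ ν (mod N)`, so the
sum of these terms is bounded by `sup_G ‖f‖`. Letting `N → ∞` only `μ = ν` survives, which is the
Cauchy inequality `‖a_ν‖ ‖z^ν‖ ≤ sup_G ‖f‖`; on `log G` it reads `‖a_ν‖ exp ⟨ν, x⟩ ≤ sup_G ‖f‖`.
If `v ∈ E(log G)` and `⟨ν, v⟩ ≠ 0`, then `⟨ν, x + t v⟩` takes every real value, forcing `a_ν = 0`.
-/

theorem IsPrimitiveRoot.sum_range_zpow_pow {K : Type*} [Field K] {ζ : K} {N : ℕ}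
    (hζ : IsPrimitiveRoot ζ N) (m : ℤ) :
    ∑ k ∈ Finset.range N, (ζ ^ m) ^ k = if (N : ℤ) ∣ m then (N : K) else 0 := by
  split_ifs with h
  · simp [(hζ.zpow_eq_one_iff_dvd m).2 h]
  · have hne : ζ ^ m ≠ 1 := mt (hζ.zpow_eq_one_iff_dvd m).1 h
    rw [geom_sum_eq hne, ← zpow_natCast, ← zpow_mul, mul_comm, zpow_mul, zpow_natCast,
      hζ.pow_eq_one, one_zpow, sub_self, zero_div]

theorem IsPrimitiveRoot.sum_piFinset_prod_zpow_pow {ι K : Type*} [Fintype ι] [DecidableEq ι]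
    [Field K] {ζ : K} {N : ℕ} (hζ : IsPrimitiveRoot ζ N) (d : ι → ℤ) :
    ∑ k ∈ Fintype.piFinset (fun _ : ι => Finset.range N), ∏ j, (ζ ^ d j) ^ k j
      = if ∀ j, (N : ℤ) ∣ d j then (N : K) ^ Fintype.card ι else 0 := by
  rw [← Finset.prod_univ_sum (fun _ => Finset.range N) (fun j k => (ζ ^ d j) ^ k)]
  simp only [hζ.sum_range_zpow_pow, Finset.prod_ite_zero, Finset.prod_const, Finset.card_univ,
    Finset.mem_univ, true_imp_iff]

theorem IsCircled.mul_mem {n : ℕ} {G : Set (Fin n → ℂ)} (hG : IsCircled G) {z : Fin n → ℂ}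
    (hz : z ∈ G) {u : Fin n → ℂ} (hu : ∀ j, ‖u j‖ = 1) : (fun j => u j * z j) ∈ G := by
  have hexp : ∀ j, Complex.exp (((u j).arg : ℂ) * Complex.I) = u j := fun j => by
    simpa [hu j] using Complex.norm_mul_exp_arg_mul_I (u j)
  simpa only [hexp] using hG z hz fun j => (u j).arg

theorem IsCircled.logSet_nonempty {n : ℕ} {G : Set (Fin n → ℂ)} (hG : IsCircled G)
    (hopen : IsOpen G) (hne : G.Nonempty) : (logSet G).Nonempty := by
  obtain ⟨z, hzG, hz⟩ := (dense_pi univ fun j _ => dense_compl_singleton (0 : ℂ)).inter_open_nonempty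
    G hopen hne
  have hz0 : ∀ j, z j ≠ 0 := fun j => hz j (mem_univ j)
  refine ⟨fun j => Real.log ‖z j‖, ?_⟩
  have hrot := hG.mul_mem hzG (u := fun j => ‖z j‖ / z j) fun j => by simp [hz0 j]
  simpa [logSet, ← Complex.ofReal_exp, Real.exp_log (norm_pos_iff.2 (hz0 _)),
    div_mul_cancel₀ _ (hz0 _)] using hrot

theorem tendsto_tsum_indicator_modEq {ι E : Type*} [Fintype ι] [NormedAddCommGroup E]
    [CompleteSpace E] {T : (ι → ℤ) → E} (hT : Summable fun μ => ‖T μ‖) (ν : ι → ℤ) :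
    Tendsto (fun N : ℕ => ∑' μ, {μ | ∀ j, μ j ≡ ν j [ZMOD N]}.indicator T μ) atTop
      (𝓝 (T ν)) := by
  have hlim : ∀ μ, Tendsto (fun N : ℕ => {μ | ∀ j, μ j ≡ ν j [ZMOD N]}.indicator T μ) atTop
      (𝓝 (if μ = ν then T ν else 0)) := by
    intro μ
    by_cases hμ : μ = ν
    · subst hμ
      simp [Set.indicator_of_mem, Int.ModEq.refl]
    obtain ⟨j, hj⟩ := Function.ne_iff.1 hμ
    rw [if_neg hμ]
    refine tendsto_const_nhds.congr' ((eventually_gt_atTop (ν j - μ j).natAbs).mono fun N hN => ?_)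
    have hncong : μ ∉ {μ | ∀ j, μ j ≡ ν j [ZMOD N]} := fun hcong => sub_ne_zero.2 hj.symm <|
      Int.eq_zero_of_abs_lt_dvd (hcong j).dvd (by rw [Int.abs_eq_natAbs]; exact_mod_cast hN)
    exact (Set.indicator_of_notMem hncong T).symm
  simpa using tendsto_tsum_of_dominated_convergence hT hlim
    (Eventually.of_forall fun N μ => norm_indicator_le_norm_self T μ)

section Laurent

variable {n : ℕ} {G : Set (Fin n → ℂ)} {f : (Fin n → ℂ) → ℂ} {a : (Fin n → ℤ) → ℂ}

theorem HasLaurent.hasSum_rotate (ha : HasLaurent G f a) (hG : IsCircled G) {z : Fin n → ℂ}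
    (hz : z ∈ G) {ζ : ℂ} (hζ : ‖ζ‖ = 1) (k : Fin n → ℕ) :
    HasSum (fun μ => (a μ * ∏ j, z j ^ μ j) * ∏ j, (ζ ^ μ j) ^ k j)
      (f fun j => ζ ^ k j * z j) := by
  convert ha _ (hG.mul_mem hz (u := fun j => ζ ^ k j) fun j => by simp [hζ]) using 2 with μ
  rw [mul_assoc, ← Finset.prod_mul_distrib]
  refine congrArg _ (Finset.prod_congr rfl fun j _ => ?_)
  rw [mul_zpow, ← zpow_natCast, ← zpow_natCast, ← zpow_mul, ← zpow_mul, mul_comm (μ j), mul_comm]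

theorem HasLaurent.hasSum_indicator_modEq (ha : HasLaurent G f a) (hG : IsCircled G)
    {z : Fin n → ℂ} (hz : z ∈ G) {ζ : ℂ} {N : ℕ} (hζ : IsPrimitiveRoot ζ N) (hN : N ≠ 0)
    (ν : Fin n → ℤ) :
    HasSum ({μ | ∀ j, μ j ≡ ν j [ZMOD N]}.indicator fun μ => a μ * ∏ j, z j ^ μ j)
      (((N : ℂ) ^ n)⁻¹ * ∑ k ∈ Fintype.piFinset (fun _ : Fin n => Finset.range N),
        (∏ j, (ζ ^ (-ν j)) ^ k j) * f fun j => ζ ^ k j * z j) := by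
  have hζ0 : ζ ≠ 0 := hζ.ne_zero hN
  have hsum := hasSum_sum (s := Fintype.piFinset fun _ : Fin n => Finset.range N) fun k _ =>
    (ha.hasSum_rotate hG hz (hζ.norm'_eq_one hN) k).mul_left (∏ j, (ζ ^ (-ν j)) ^ k j)
  refine (hsum.mul_left ((N : ℂ) ^ n)⁻¹).congr_fun fun μ => ?_
  have hchar : ∀ k : Fin n → ℕ, (∏ j, (ζ ^ (-ν j)) ^ k j) *
      ((a μ * ∏ j, z j ^ μ j) * ∏ j, (ζ ^ μ j) ^ k j)
        = (a μ * ∏ j, z j ^ μ j) * ∏ j, (ζ ^ (μ j - ν j)) ^ k j := by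
    intro k
    rw [mul_left_comm, ← Finset.prod_mul_distrib]
    refine congrArg _ (Finset.prod_congr rfl fun j _ => ?_)
    rw [← mul_pow, ← zpow_add₀ hζ0, neg_add_eq_sub]
  rw [Finset.sum_congr rfl fun k _ => hchar k, ← Finset.mul_sum, hζ.sum_piFinset_prod_zpow_pow,
    Fintype.card_fin]
  have hcong : (∀ j, μ j ≡ ν j [ZMOD N]) ↔ ∀ j, (N : ℤ) ∣ μ j - ν j :=
    forall_congr' fun j => Int.modEq_comm.trans Int.modEq_iff_dvd
  have hNn : (N : ℂ) ^ n ≠ 0 := pow_ne_zero _ (Nat.cast_ne_zero.2 hN)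
  simp only [Set.indicator_apply, Set.mem_ofPred_eq]
  by_cases h : ∀ j, μ j ≡ ν j [ZMOD N]
  · rw [if_pos h, if_pos (hcong.1 h)]
    field_simp
  · rw [if_neg h, if_neg (mt hcong.2 h), mul_zero, mul_zero]

theorem HasLaurent.norm_tsum_indicator_modEq_le (ha : HasLaurent G f a) (hG : IsCircled G)
    {C : ℝ} (hC : ∀ z ∈ G, ‖f z‖ ≤ C) {z : Fin n → ℂ} (hz : z ∈ G) {N : ℕ} (hN : N ≠ 0)
    (ν : Fin n → ℤ) :
    ‖∑' μ, {μ | ∀ j, μ j ≡ ν j [ZMOD N]}.indicator (fun μ => a μ * ∏ j, z j ^ μ j) μ‖ ≤ C := by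
  have hζ := Complex.isPrimitiveRoot_exp N hN
  have hζ1 := hζ.norm'_eq_one hN
  rw [(ha.hasSum_indicator_modEq hG hz hζ hN ν).tsum_eq, norm_mul, norm_inv, norm_pow,
    Complex.norm_natCast, inv_mul_le_iff₀ (by positivity)]
  refine (norm_sum_le _ _).trans ?_
  calc _ ≤ ∑ k ∈ Fintype.piFinset (fun _ : Fin n => Finset.range N), C :=
        Finset.sum_le_sum fun k _ => by
          simpa [norm_prod, hζ1] using hC _ (hG.mul_mem hz (u := fun j => _ ^ k j) fun j => by
            simp [hζ1])
    _ = (N : ℝ) ^ n * C := by simp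

theorem HasLaurent.norm_mul_prod_zpow_le (ha : HasLaurent G f a) (hG : IsCircled G)
    {C : ℝ} (hC : ∀ z ∈ G, ‖f z‖ ≤ C) (ν : Fin n → ℤ) {z : Fin n → ℂ} (hz : z ∈ G) :
    ‖a ν * ∏ j, z j ^ ν j‖ ≤ C :=
  le_of_tendsto (tendsto_tsum_indicator_modEq (summable_norm_iff.2 (ha z hz).summable) ν).norm
    ((eventually_ne_atTop 0).mono fun _ hN => ha.norm_tsum_indicator_modEq_le hG hC hz hN ν)

theorem HasLaurent.norm_mul_exp_le (ha : HasLaurent G f a) (hG : IsCircled G)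
    {C : ℝ} (hC : ∀ z ∈ G, ‖f z‖ ≤ C) (ν : Fin n → ℤ) {x : Fin n → ℝ} (hx : x ∈ logSet G) :
    ‖a ν‖ * Real.exp (∑ j, (ν j : ℝ) * x j) ≤ C := by
  convert ha.norm_mul_prod_zpow_le hG hC ν hx using 1
  simp [norm_prod, Real.exp_sum, mul_comm (ν _ : ℝ), Real.exp_mul, Real.rpow_intCast]

end Laurent

theorem nonpos_of_forall_mul_exp_le {c C : ℝ} (h : ∀ s, c * Real.exp s ≤ C) : c ≤ 0 := by
  by_contra! hc
  have := h (Real.log ((|C| + 1) / c))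
  rw [Real.exp_log (by positivity), mul_div_cancel₀ _ hc.ne'] at this
  linarith [le_abs_self C]

theorem stmt15_general {n : ℕ} (G : Set (Fin n → ℂ)) (hdom : IsDomainSet G) (hcirc : IsCircled G)
    (f : (Fin n → ℂ) → ℂ) (hf : f ∈ Hinf G)
    (a : (Fin n → ℤ) → ℂ) (ha : HasLaurent G f a) :
    ∀ ν : Fin n → ℤ,
      (∃ v ∈ ESpace (logSet G), (∑ j, (ν j : ℝ) * v j) ≠ 0) → a ν = 0 := by
  rintro ν ⟨v, hv, hνv⟩
  obtain ⟨-, C, hC⟩ := hf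
  obtain ⟨x, hx⟩ := hcirc.logSet_nonempty hdom.1 hdom.2.nonempty
  have hbound : ∀ s, ‖a ν‖ * Real.exp s ≤ C := fun s => by
    set t := (s - ∑ j, (ν j : ℝ) * x j) / ∑ j, (ν j : ℝ) * v j
    have hs : ∑ j, (ν j : ℝ) * (x + t • v) j = s := by
      simp only [Pi.add_apply, Pi.smul_apply, smul_eq_mul, mul_add, Finset.sum_add_distrib,
        mul_left_comm _ t, ← Finset.mul_sum, t]
      field_simp
      ring
    simpa only [hs] using ha.norm_mul_exp_le hcirc hC ν (hv x hx t)
  exact norm_le_zero_iff.1 (nonpos_of_forall_mul_exp_le hbound)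

/-- Laurent coefficients of bounded holomorphic functions vanish off `E(log G)^⊥`. -/
theorem stmt15 {n : ℕ} (G : Set (Fin n → ℂ)) (hdom : IsDomainSet G) (hcirc : IsCircled G)
    (hDoH : IsDomainOfHolomorphy G) (f : (Fin n → ℂ) → ℂ) (hf : f ∈ Hinf G)
    (a : (Fin n → ℤ) → ℂ) (ha : HasLaurent G f a) :
    ∀ ν : Fin n → ℤ,
      (∃ v ∈ ESpace (logSet G), (∑ j, (ν j : ℝ) * v j) ≠ 0) → a ν = 0 :=
  stmt15_general G hdom hcirc f hf a ha
end
end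

section
/- Let G ⊆ ℂ^n be an n-circled H^∞(G)-domain of holomorphy such that for every ε ∈ {0,1}^n with V_ε ∩ ∂G ≠ ∅ one has G_ε ⊆ G. Let α ∈ ℤ^n be such that the monomial z^α is a bounded holomorphic function on G (in particular z_j ≠ 0 on G whenever α_j < 0). Then z_j ≠ 0 on cl G for every j with α_j < 0; consequently z^α extends holomorphically to an open neighbourhood of cl G, i.e., z^α ∈ O(cl G). -/
open MeasureTheory Filter Topology Set
open scoped ENNReal

noncomputable section

/-!
If a boundary point `w` of `G` had `w j = 0` for some `j` with `α j < 0`, then `w ∈ V_ε` for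
the zero pattern `ε` of `w`, so by hypothesis `G_ε ⊆ G`. Since `ε j = true`, scaling the `j`-th
coordinate of any point of `G` by `λ = 0` produces a point of `G_ε ⊆ G` with vanishing `j`-th
coordinate, which is impossible. Hence `z^α` is holomorphic on the open set
`{z | z j ≠ 0 whenever α j < 0}`, a neighbourhood of `cl G`.
-/

section

variable {n : ℕ}

theorem mem_Veps_decide_eq_zero (w : Fin n → ℂ) : w ∈ Veps (fun k => decide (w k = 0)) :=
  fun _ => ⟨of_decide_eq_true, of_decide_eq_false⟩

theorem exists_mem_Geps_apply_eq_zero {G : Set (Fin n → ℂ)} (hG : G.Nonempty)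
    {ε : Fin n → Bool} {j : Fin n} (hεj : ε j = true) : ∃ w ∈ Geps G ε, w j = 0 := by
  obtain ⟨z, hz⟩ := hG
  exact ⟨_, ⟨0, z, fun _ => by simp, hz, rfl⟩, by simp [hεj]⟩

theorem apply_ne_zero_on_closure {G : Set (Fin n → ℂ)} (hopen : IsOpen G) (hne : G.Nonempty)
    (hGeps : ∀ ε : Fin n → Bool, (Veps ε ∩ frontier G).Nonempty → Geps G ε ⊆ G)
    {j : Fin n} (hj : ∀ z ∈ G, z j ≠ 0) : ∀ w ∈ closure G, w j ≠ 0 := by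
  intro w hw hwj
  have hw_frontier : w ∈ frontier G := by
    rw [hopen.frontier_eq]
    exact ⟨hw, fun hwG => hj w hwG hwj⟩
  have hsub := hGeps _ ⟨w, mem_Veps_decide_eq_zero w, hw_frontier⟩
  obtain ⟨v, hv, hvj⟩ := exists_mem_Geps_apply_eq_zero hne
    (ε := fun k => decide (w k = 0)) (decide_eq_true hwj)
  exact hj v (hsub hv) hvj

theorem isOpen_setOf_zpow_defined (α : Fin n → ℤ) :
    IsOpen {z : Fin n → ℂ | ∀ j, α j < 0 → z j ≠ 0} := by
  simp only [ofPred_forall]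
  exact isOpen_iInter_of_finite fun j => isOpen_iInter_of_finite fun _ =>
    isOpen_ne_fun (continuous_apply j) continuous_const

theorem differentiableOn_prod_zpow (α : Fin n → ℤ) :
    DifferentiableOn ℂ (fun z : Fin n → ℂ => ∏ j, z j ^ α j)
      {z | ∀ j, α j < 0 → z j ≠ 0} := by
  intro z hz
  have hfactor : ∀ j ∈ Finset.univ, DifferentiableAt ℂ (fun z : Fin n → ℂ => z j ^ α j) z :=
    fun j _ => (differentiableAt_apply j z).zpow ((lt_or_ge (α j) 0).imp (hz j) id)
  exact (HasFDerivAt.finsetProd fun j hj => (hfactor j hj).hasFDerivAt)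
    |>.differentiableAt.differentiableWithinAt

end

theorem stmt17_general {n : ℕ} (G : Set (Fin n → ℂ)) (hdom : IsDomainSet G)
    (hGeps : ∀ ε : Fin n → Bool, (Veps ε ∩ frontier G).Nonempty → Geps G ε ⊆ G)
    (α : Fin n → ℤ) (hα : ∀ j, α j < 0 → ∀ z ∈ G, z j ≠ 0) :
    (∀ j, α j < 0 → ∀ z ∈ closure G, z j ≠ 0) ∧
    (fun z : Fin n → ℂ => ∏ j, z j ^ α j) ∈ Ocl G := by
  have hclosure : ∀ j, α j < 0 → ∀ z ∈ closure G, z j ≠ 0 :=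
    fun j hj => apply_ne_zero_on_closure hdom.1 hdom.2.1 hGeps (hα j hj)
  exact ⟨hclosure, _, isOpen_setOf_zpow_defined α, fun z hz j hj => hclosure j hj z hz, _,
    differentiableOn_prod_zpow α, fun _ _ => rfl⟩

/-- Bounded monomials on such `G` extend holomorphically past `cl G`. -/
theorem stmt17 {n : ℕ} (G : Set (Fin n → ℂ)) (hdom : IsDomainSet G) (hcirc : IsCircled G)
    (hDoH : IsDomainOfHolomorphyFor G (Hinf G))
    (hGeps : ∀ ε : Fin n → Bool, (Veps ε ∩ frontier G).Nonempty → Geps G ε ⊆ G)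
    (α : Fin n → ℤ) (hα : ∀ j, α j < 0 → ∀ z ∈ G, z j ≠ 0)
    (hbdd : (fun z : Fin n → ℂ => ∏ j, z j ^ α j) ∈ Hinf G) :
    (∀ j, α j < 0 → ∀ z ∈ closure G, z j ≠ 0) ∧
    (fun z : Fin n → ℂ => ∏ j, z j ^ α j) ∈ Ocl G :=
  stmt17_general G hdom hGeps α hα
end
end
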